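/- Moment–cumulant recursion. Let X be a real random variable whose moment generating function t ↦ E[e^{tX}] is finite on an open neighborhood of 0, and for j ≥ 1 define the cumulant κ_j(X) as the j-th iterated derivative at t = 0 of the cumulant generating function K(t) = log E[e^{tX}]. Then, for every m ∈ ℕ, E[X^{m+1}] = Σ_{s=0}^m binomial(m, s) · κ_{s+1}(X) · E[X^{m−s}]. -/

import Mathlib

/-! Near `0` the mgf is `exp ∘ cgf`, so `mgf' = cgf' · mgf`. Differentiating this identity `m` times
with the Leibniz rule and evaluating at `0`, where the derivatives of the mgf are the moments,
gives the recursion. -/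

open MeasureTheory ProbabilityTheory Finset Filter Topology

namespace ProbabilityTheory

variable {Ω : Type*} {mΩ : MeasurableSpace Ω} {μ : Measure Ω} [NeZero μ] {X : Ω → ℝ} {t : ℝ}

lemma deriv_mgf_eq_deriv_cgf_mul_mgf (ht : t ∈ interior (integrableExpSet X μ)) :
    deriv (mgf X μ) t = deriv (cgf X μ) t * mgf X μ t := by
  have hpos : 0 < mgf X μ t :=
    mgf_pos' (NeZero.ne μ) (interior_subset (s := integrableExpSet X μ) ht)
  rw [deriv_cgf ht, deriv_mgf ht, div_mul_cancel₀ _ hpos.ne']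

lemma deriv_mgf_eventuallyEq_deriv_cgf_mul_mgf (ht : t ∈ interior (integrableExpSet X μ)) :
    deriv (mgf X μ) =ᶠ[𝓝 t] deriv (cgf X μ) * mgf X μ :=
  eventually_of_mem (isOpen_interior.mem_nhds ht) fun _ hs ↦
    deriv_mgf_eq_deriv_cgf_mul_mgf hs

lemma integral_pow_succ_eq_sum_iteratedDeriv_cgf (h : 0 ∈ interior (integrableExpSet X μ))
    (m : ℕ) :
    μ[X ^ (m + 1)] = ∑ s ∈ range (m + 1),
      (m.choose s : ℝ) * iteratedDeriv (s + 1) (cgf X μ) 0 * μ[X ^ (m - s)] := by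
  have hcgf : ContDiffAt ℝ m (deriv (cgf X μ)) 0 := (analyticAt_cgf h).deriv.contDiffAt
  have hmgf : ContDiffAt ℝ m (mgf X μ) 0 := (analyticAt_mgf h).contDiffAt
  rw [← iteratedDeriv_mgf_zero h, iteratedDeriv_succ',
    (deriv_mgf_eventuallyEq_deriv_cgf_mul_mgf h).iteratedDeriv_eq, iteratedDeriv_mul hcgf hmgf]
  simp only [← iteratedDeriv_succ', iteratedDeriv_mgf_zero h]

end ProbabilityTheory

theorem moment_cumulant_recursion
    {Ω : Type*} [MeasureSpace Ω] [IsProbabilityMeasure (ℙ : Measure Ω)]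
    (X : Ω → ℝ)
    (hmgf : ∃ ε : ℝ, 0 < ε ∧ ∀ t : ℝ, |t| < ε →
      Integrable (fun ω => Real.exp (t * X ω))) :
    ∀ m : ℕ,
      ∫ ω, (X ω) ^ (m + 1) =
        ∑ s ∈ range (m + 1), (m.choose s : ℝ) *
          iteratedDeriv (s + 1) (fun t : ℝ => Real.log (∫ ω, Real.exp (t * X ω))) 0 *
          ∫ ω, (X ω) ^ (m - s) := by
  obtain ⟨ε, hε, hint⟩ := hmgf
  have h0 : (0 : ℝ) ∈ interior (integrableExpSet X ℙ) :=
    mem_interior_iff_mem_nhds.2 <| mem_of_superset (Metric.ball_mem_nhds 0 hε) fun t ht ↦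
      hint t (by simpa using ht)
  exact integral_pow_succ_eq_sum_iteratedDeriv_cgf h0
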